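/- arXiv:1905.12398 — 2 statements merged into one kernel-verified Lean document; each statement's English description precedes it below -/
import Mathlib

section
/- Let X be a nonempty set and D : X × X → [0,∞) an F-metric on X with associated pair (f, α), where f : (0,∞) → ℝ is non-decreasing and satisfies: for every sequence (tₙ) in (0,∞), tₙ → 0 ⟺ f(tₙ) → -∞, and α ≥ 0. Then D is uniformly regular: for every ε > 0 there exists δ > 0 such that for all x, y, z ∈ X, if D(x,y) < δ and D(y,z) < δ, then D(x,z) < ε. -/
open Filter Finset

/-- An F-metric `D` is uniformly regular: for every `ε > 0` there is `δ > 0` such that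
`D x y < δ` and `D y z < δ` imply `D x z < ε`. -/
theorem fMetric_uniformly_regular {X : Type*} [Nonempty X] (D : X → X → ℝ)
    (f : ℝ → ℝ) (α : ℝ)
    (hD_nonneg : ∀ x y, 0 ≤ D x y)
    (hf_mono : ∀ s t : ℝ, 0 < s → s < t → f s ≤ f t)
    (hf_seq : ∀ t : ℕ → ℝ, (∀ n, 0 < t n) →
      (Tendsto t atTop (nhds 0) ↔ Tendsto (fun n => f (t n)) atTop atBot))
    (hα : 0 ≤ α)
    (hD1 : ∀ x y, D x y = 0 ↔ x = y)
    (hD2 : ∀ x y, D x y = D y x)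
    (hD3 : ∀ x y : X, 0 < D x y → ∀ N : ℕ, 2 ≤ N → ∀ u : ℕ → X,
      u 0 = x → u (N - 1) = y →
      f (D x y) ≤ f (∑ i ∈ Finset.range (N - 1), D (u i) (u (i + 1))) + α) :
    ∀ ε : ℝ, 0 < ε → ∃ δ : ℝ, 0 < δ ∧
      ∀ x y z : X, D x y < δ → D y z < δ → D x z < ε := by
  intro ε hε
  -- Step 1: find δ₀ > 0 with f t < f ε - α for all 0 < t < δ₀
  have hδ0 : ∃ δ0 : ℝ, 0 < δ0 ∧ ∀ t : ℝ, 0 < t → t < δ0 → f t < f ε - α := by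
    by_contra h
    push_neg at h
    have hsel : ∀ n : ℕ, ∃ t : ℝ, 0 < t ∧ t < 1 / (n + 1) ∧ f ε - α ≤ f t := by
      intro n
      obtain ⟨t, ht1, ht2, ht3⟩ := h (1 / (n + 1)) (by positivity)
      exact ⟨t, ht1, ht2, ht3⟩
    choose t ht1 ht2 ht3 using hsel
    have htend : Tendsto t atTop (nhds 0) := by
      apply squeeze_zero (fun n => (ht1 n).le) (fun n => (ht2 n).le)
      exact tendsto_one_div_add_atTop_nhds_zero_nat
    have hbot : Tendsto (fun n => f (t n)) atTop atBot := (hf_seq t ht1).mp htend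
    obtain ⟨n, hn⟩ := (hbot.eventually (eventually_lt_atBot (f ε - α))).exists
    exact absurd (ht3 n) (not_le.mpr hn)
  obtain ⟨δ0, hδ0pos, hδ0⟩ := hδ0
  refine ⟨δ0 / 2, by positivity, fun x y z hxy hyz => ?_⟩
  by_contra hc
  push_neg at hc
  have hxz : 0 < D x z := lt_of_lt_of_le hε hc
  -- sum is positive
  have hS : 0 < D x y + D y z := by
    rcases lt_or_eq_of_le (hD_nonneg x y) with h | h
    · linarith [hD_nonneg y z]
    rcases lt_or_eq_of_le (hD_nonneg y z) with h' | h'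
    · linarith
    exfalso
    have hx : x = y := (hD1 x y).mp h.symm
    have hy : y = z := (hD1 y z).mp h'.symm
    rw [hx, hy] at hxz
    rw [(hD1 z z).mpr rfl] at hxz
    exact lt_irrefl 0 hxz
  set u : ℕ → X := fun n => if n = 0 then x else if n = 1 then y else z with hu
  have hkey := hD3 x z hxz 3 (by norm_num) u (by simp [hu]) (by simp [hu])
  have hsum : ∑ i ∈ Finset.range (3 - 1), D (u i) (u (i + 1)) = D x y + D y z := by
    simp [hu, Finset.sum_range_succ]
  rw [hsum] at hkey
  have hflt : f (D x y + D y z) < f ε - α := hδ0 _ hS (by linarith)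
  have hfε : f ε ≤ f (D x z) := by
    rcases lt_or_eq_of_le hc with h | h
    · exact hf_mono ε (D x z) hε h
    · rw [h]
  linarith
end

section
/- Let X be a nonempty set and D : X × X → [0,∞) an F-metric on X with associated pair (f, α), where f : (0,∞) → ℝ is non-decreasing and satisfies: for every sequence (tₙ) in (0,∞), tₙ → 0 ⟺ f(tₙ) → -∞, and α ≥ 0. Define d : X × X → ℝ by d(x,y) = inf { ∑_{i=1}^{N-1} D(uᵢ,u_{i+1}) : N ∈ ℕ, N ≥ 2, u₁,…,u_N ∈ X with (u₁,u_N) = (x,y) }. Then d is a metric on X: d(x,y) ≥ 0, d(x,y) = 0 ⟺ x = y, d(x,y) = d(y,x), and d(x,z) ≤ d(x,y) + d(y,z) for all x,y,z ∈ X. -/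
open Filter Finset

/-- The chain distance induced by a distance function `D`: the infimum over all finite
chains `u₁ = x, …, u_N = y` (`N ≥ 2`) of `∑_{i=1}^{N-1} D (uᵢ) (u_{i+1})`. -/
noncomputable def chainDist {X : Type*} (D : X → X → ℝ) (x y : X) : ℝ :=
  sInf {s | ∃ N : ℕ, 2 ≤ N ∧ ∃ u : ℕ → X, u 0 = x ∧ u (N - 1) = y ∧
    s = ∑ i ∈ Finset.range (N - 1), D (u i) (u (i + 1))}

/-- The chain distance induced by an F-metric `D` is a metric on `X`. -/
theorem chainDist_isMetric {X : Type*} [Nonempty X] (D : X → X → ℝ)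
    (f : ℝ → ℝ) (α : ℝ)
    (hD_nonneg : ∀ x y, 0 ≤ D x y)
    (hf_mono : ∀ s t : ℝ, 0 < s → s < t → f s ≤ f t)
    (hf_seq : ∀ t : ℕ → ℝ, (∀ n, 0 < t n) →
      (Tendsto t atTop (nhds 0) ↔ Tendsto (fun n => f (t n)) atTop atBot))
    (hα : 0 ≤ α)
    (hD1 : ∀ x y, D x y = 0 ↔ x = y)
    (hD2 : ∀ x y, D x y = D y x)
    (hD3 : ∀ x y : X, 0 < D x y → ∀ N : ℕ, 2 ≤ N → ∀ u : ℕ → X,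
      u 0 = x → u (N - 1) = y →
      f (D x y) ≤ f (∑ i ∈ Finset.range (N - 1), D (u i) (u (i + 1))) + α) :
    (∀ x y, 0 ≤ chainDist D x y) ∧
    (∀ x y, chainDist D x y = 0 ↔ x = y) ∧
    (∀ x y, chainDist D x y = chainDist D y x) ∧
    (∀ x y z : X, chainDist D x z ≤ chainDist D x y + chainDist D y z) := by
  set S : X → X → Set ℝ := fun x y => {s | ∃ N : ℕ, 2 ≤ N ∧ ∃ u : ℕ → X, u 0 = x ∧ u (N - 1) = y ∧
    s = ∑ i ∈ Finset.range (N - 1), D (u i) (u (i + 1))} with hSdef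
  have hcd : ∀ x y, chainDist D x y = sInf (S x y) := fun _ _ => rfl
  have hmemD : ∀ x y, D x y ∈ S x y := by
    intro x y
    exact ⟨2, le_refl 2, fun i => if i = 0 then x else y, by simp, by simp, by
      simp [Finset.sum_range_one]⟩
  have hSnonneg : ∀ x y s, s ∈ S x y → 0 ≤ s := by
    rintro x y s ⟨N, hN, u, hu0, huN, rfl⟩
    exact Finset.sum_nonneg fun i _ => hD_nonneg _ _
  have hbdd : ∀ x y, BddBelow (S x y) := fun x y => ⟨0, fun s hs => hSnonneg x y s hs⟩
  have hne : ∀ x y, (S x y).Nonempty := fun x y => ⟨D x y, hmemD x y⟩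
  have hnonneg : ∀ x y, 0 ≤ chainDist D x y := by
    intro x y
    rw [hcd]
    exact le_csInf (hne x y) (fun s hs => hSnonneg x y s hs)
  -- symmetry
  have hsub : ∀ x y, S x y ⊆ S y x := by
    rintro x y s ⟨N, hN, u, hu0, huN, rfl⟩
    refine ⟨N, hN, fun i => u (N - 1 - i), by simpa, by simpa, ?_⟩
    rw [← Finset.sum_range_reflect (fun j => D (u j) (u (j + 1))) (N - 1)]
    apply Finset.sum_congr rfl
    intro i hi
    simp only [Finset.mem_range] at hi
    show D (u (N - 1 - 1 - i)) (u (N - 1 - 1 - i + 1))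
        = D (u (N - 1 - i)) (u (N - 1 - (i + 1)))
    rw [hD2]
    congr 2 <;> omega
  have hsymm : ∀ x y, chainDist D x y = chainDist D y x := by
    intro x y
    rw [hcd, hcd, Set.Subset.antisymm (hsub x y) (hsub y x)]
  -- zero iff
  have hzero_mem : ∀ x : X, (0 : ℝ) ∈ S x x := by
    intro x
    exact ⟨2, le_refl 2, fun _ => x, rfl, rfl, by
      simp [Finset.sum_range_one, (hD1 x x).mpr rfl]⟩
  have hpos : ∀ x y, x ≠ y → ∀ s ∈ S x y, 0 < s := by
    rintro x y hxy s ⟨N, hN, u, hu0, huN, rfl⟩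
    rcases (Finset.sum_nonneg fun i _ => hD_nonneg (u i) (u (i + 1))).lt_or_eq with h | h
    · exact h
    · exfalso
      have hterm : ∀ i ∈ Finset.range (N - 1), D (u i) (u (i + 1)) = 0 :=
        (Finset.sum_eq_zero_iff_of_nonneg fun i _ => hD_nonneg _ _).mp h.symm
      have heq : ∀ k, k ≤ N - 1 → u 0 = u k := by
        intro k
        induction k with
        | zero => intro _; rfl
        | succ n ih =>
          intro hk
          exact (ih (by omega)).trans
            ((hD1 _ _).mp (hterm n (Finset.mem_range.mpr (by omega))))
      exact hxy (hu0 ▸ huN ▸ heq (N - 1) le_rfl)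
  have hzero : ∀ x y, chainDist D x y = 0 ↔ x = y := by
    intro x y
    constructor
    · intro h0
      by_contra hxy
      have hDxy : 0 < D x y :=
        lt_of_le_of_ne (hD_nonneg x y) (fun h => hxy ((hD1 x y).mp h.symm))
      rw [hcd] at h0
      have hchoice : ∀ n : ℕ, ∃ s ∈ S x y, s < 1 / (n + 1) := by
        intro n
        apply exists_lt_of_csInf_lt (hne x y)
        rw [h0]
        positivity
      choose t ht hlt using hchoice
      have htpos : ∀ n, 0 < t n := fun n => hpos x y hxy (t n) (ht n)
      have htend : Tendsto t atTop (nhds 0) := by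
        apply squeeze_zero (fun n => (htpos n).le) (fun n => (hlt n).le)
        exact tendsto_one_div_add_atTop_nhds_zero_nat
      have hfbot : Tendsto (fun n => f (t n)) atTop atBot :=
        (hf_seq t htpos).mp htend
      have hlow : ∀ n, f (D x y) - α ≤ f (t n) := by
        intro n
        obtain ⟨N, hN, u, hu0, huN, hsum⟩ := ht n
        have := hD3 x y hDxy N hN u hu0 huN
        rw [← hsum] at this
        linarith
      obtain ⟨n, hn⟩ := (tendsto_atBot.mp hfbot (f (D x y) - α - 1)).exists
      linarith [hlow n]
    · rintro rfl
      rw [hcd]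
      exact le_antisymm (csInf_le (hbdd x x) (hzero_mem x))
        (le_csInf (hne x x) (fun s hs => hSnonneg x x s hs))
  -- triangle
  have hconcat : ∀ x y z a b, a ∈ S x y → b ∈ S y z → a + b ∈ S x z := by
    rintro x y z a b ⟨N, hN, u, hu0, huN, rfl⟩ ⟨M, hM, v, hv0, hvM, rfl⟩
    refine ⟨N + M - 1, by omega, fun i => if i ≤ N - 1 then u i else v (i - (N - 1)),
      ?_, ?_, ?_⟩
    · show (if 0 ≤ N - 1 then u 0 else v (0 - (N - 1))) = x
      rw [if_pos (Nat.zero_le _)]; exact hu0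
    · show (if N + M - 1 - 1 ≤ N - 1 then u (N + M - 1 - 1)
          else v (N + M - 1 - 1 - (N - 1))) = z
      rw [if_neg (by omega)]
      have h3 : N + M - 1 - 1 - (N - 1) = M - 1 := by omega
      rw [h3]; exact hvM
    · have hsplit : N + M - 1 - 1 = (N - 1) + (M - 1) := by omega
      rw [hsplit, Finset.sum_range_add]
      congr 1
      · apply Finset.sum_congr rfl
        intro i hi
        simp only [Finset.mem_range] at hi
        show D (u i) (u (i + 1))
            = D (if i ≤ N - 1 then u i else v (i - (N - 1)))
                (if i + 1 ≤ N - 1 then u (i + 1) else v (i + 1 - (N - 1)))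
        rw [if_pos (by omega : i ≤ N - 1), if_pos (by omega : i + 1 ≤ N - 1)]
      · apply Finset.sum_congr rfl
        intro j hj
        simp only [Finset.mem_range] at hj
        show D (v j) (v (j + 1))
            = D (if N - 1 + j ≤ N - 1 then u (N - 1 + j) else v (N - 1 + j - (N - 1)))
                (if N - 1 + j + 1 ≤ N - 1 then u (N - 1 + j + 1)
                  else v (N - 1 + j + 1 - (N - 1)))
        rw [if_neg (by omega : ¬ (N - 1 + j + 1 ≤ N - 1))]
        have h3 : N - 1 + j + 1 - (N - 1) = j + 1 := by omega
        rw [h3]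
        rcases Nat.eq_zero_or_pos j with hj0 | hjp
        · subst hj0
          rw [if_pos (by omega : N - 1 + 0 ≤ N - 1)]
          have h4 : N - 1 + 0 = N - 1 := by omega
          rw [h4, huN, hv0]
        · rw [if_neg (by omega : ¬ (N - 1 + j ≤ N - 1))]
          have h5 : N - 1 + j - (N - 1) = j := by omega
          rw [h5]
  have htri : ∀ x y z : X, chainDist D x z ≤ chainDist D x y + chainDist D y z := by
    intro x y z
    simp only [hcd]
    refine le_of_forall_pos_le_add ?_
    intro ε hε
    obtain ⟨a, ha, hlta⟩ := exists_lt_of_csInf_lt (hne x y)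
      (lt_add_of_pos_right _ (half_pos hε))
    obtain ⟨b, hb, hltb⟩ := exists_lt_of_csInf_lt (hne y z)
      (lt_add_of_pos_right _ (half_pos hε))
    have hc := csInf_le (hbdd x z) (hconcat x y z a b ha hb)
    linarith
  exact ⟨hnonneg, hzero, hsymm, htri⟩
end
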